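/- arXiv:math/0108037 — 9 statements merged into one kernel-verified Lean document; each statement's English description precedes it below -/
import Mathlib

section
/- The kernel of ψ equals the ideal of ℂ[x,y,z,t] generated by the six polynomials f = x³z + xyt − z³ + t², g = x²yz − xzt + y²t, h = x⁵ − x²z² + 2xy²z − y⁴, q₂₁ = x³t − xyz² + y³z, q₂₂ = −xt² + y²z², q₂₃ = −x²zt + yz³ − yt². -/
/-!
Modulo the six generators every polynomial is congruent to a normal form
`a₀ + a₁ y + a₂ y² + a₃ y³ + (b₀ + b₁ y) t` with `aᵢ, bⱼ ∈ ℂ[x, z]`: the generators `h`, `g`, `f`, `q23`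
rewrite `y⁴`, `y² t`, `t²`, `y t²`. Since `ψ` maps `ℂ[x, z]` onto `ℂ[u², u³ + v²]` and `ψ y = uv`,
`ψ t = v (u³ + v²)`, the image of a normal form is a combination of `1, u, v, uv` over that ring
whose four coefficients are explicit `ℂ[x, z]`-linear expressions in the `aᵢ, bⱼ`. If the image is
zero, so are these coefficients, as one sees by evaluating at the four points of a fibre of
`(μ, ν) ↦ (μ², μ³ + ν²)`. As `z` is prime and does not divide `x`, the resulting equations force the
normal form to be a `ℂ[x, z]`-combination of `x f + q22` and `q21`.
-/

noncomputable section

open MvPolynomial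

namespace Reid

abbrev A : Type := MvPolynomial (Fin 4) ℂ
abbrev B : Type := MvPolynomial (Fin 2) ℂ

def u : B := X 0
def v : B := X 1

/-- The ℂ-algebra homomorphism `ψ : ℂ[x,y,z,t] → ℂ[u,v]` with
`ψ(x) = u²`, `ψ(y) = uv`, `ψ(z) = u³ + v²`, `ψ(t) = u³v + v³`. -/
def ψ : A →ₐ[ℂ] B := aeval ![u ^ 2, u * v, u ^ 3 + v ^ 2, u ^ 3 * v + v ^ 3]

def x : A := X 0
def y : A := X 1
def z : A := X 2
def t : A := X 3

def f : A := x ^ 3 * z + x * y * t - z ^ 3 + t ^ 2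
def g : A := x ^ 2 * y * z - x * z * t + y ^ 2 * t
def h : A := x ^ 5 - x ^ 2 * z ^ 2 + 2 * x * y ^ 2 * z - y ^ 4
def q21 : A := x ^ 3 * t - x * y * z ^ 2 + y ^ 3 * z
def q22 : A := -(x * t ^ 2) + y ^ 2 * z ^ 2
def q23 : A := -(x ^ 2 * z * t) + y * z ^ 3 - y * t ^ 2

end Reid

theorem exists_eq_mul_of_pow_mul_eq_mul {R : Type*} [CommMonoidWithZero R] [IsCancelMulZero R]
    {p q a b : R} (hp : Prime p) (hpq : ¬p ∣ q) (n : ℕ) (h : p ^ n * a = q * b) :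
    ∃ w, b = p ^ n * w ∧ a = q * w := by
  obtain ⟨w, rfl⟩ := hp.pow_dvd_of_dvd_mul_left n hpq ⟨a, h.symm⟩
  exact ⟨w, rfl, mul_left_cancel₀ (pow_ne_zero n hp.ne_zero) (h.trans (mul_left_comm _ _ _))⟩

theorem MvPolynomial.eq_zero_of_forall_eval_fin_two_eq_zero {R : Type*} [CommRing R] [IsDomain R]
    [Infinite R] {p : MvPolynomial (Fin 2) R} (hp : ∀ X Z : R, eval ![X, Z] p = 0) : p = 0 :=
  funext fun w => by
    rw [show w = ![w 0, w 1] from List.ofFn_inj.mp rfl, hp, map_zero]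

/-- Over `(μ², Z)` lie `(μ, ±ν)` and `(-μ, ±ν')` with `ν² = Z - μ³` and `ν'² = Z + μ³`, so that
`ν² ν'² = Z² - μ⁶`. -/
theorem fiber_relations {K : Type*} [Field K] [IsAlgClosed K] [CharZero K] {a b c d : K → K → K}
    (H : ∀ μ ν : K, a (μ ^ 2) (μ ^ 3 + ν ^ 2) + b (μ ^ 2) (μ ^ 3 + ν ^ 2) * μ
      + c (μ ^ 2) (μ ^ 3 + ν ^ 2) * ν + d (μ ^ 2) (μ ^ 3 + ν ^ 2) * (μ * ν) = 0)
    (X Z : K) :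
    a X Z = 0 ∧ X * b X Z = 0 ∧ (Z ^ 2 - X ^ 3) * c X Z = 0 ∧
      X * (Z ^ 2 - X ^ 3) * d X Z = 0 := by
  obtain ⟨μ, rfl⟩ := IsAlgClosed.exists_pow_nat_eq X two_pos
  obtain ⟨ν, hν⟩ := IsAlgClosed.exists_pow_nat_eq (Z - μ ^ 3) two_pos
  obtain ⟨ν', hν'⟩ := IsAlgClosed.exists_pow_nat_eq (Z + μ ^ 3) two_pos
  have hZ : μ ^ 3 + ν ^ 2 = Z := by rw [hν]; ring
  have hZ' : (-μ) ^ 3 + ν' ^ 2 = Z := by rw [hν']; ring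
  have e₁ := H μ ν
  have e₂ := H μ (-ν)
  have e₃ := H (-μ) ν'
  have e₄ := H (-μ) (-ν')
  simp only [neg_sq, hZ, hZ'] at e₁ e₂ e₃ e₄
  refine ⟨?_, ?_, ?_, ?_⟩
  · linear_combination (e₁ + e₂ + e₃ + e₄) / 4
  · linear_combination μ * (e₁ + e₂ - e₃ - e₄) / 4
  · linear_combination ν * ν' * (ν' * (e₁ - e₂) + ν * (e₃ - e₄)) / 4
      - c (μ ^ 2) Z * (Z + μ ^ 3) * hν - c (μ ^ 2) Z * ν ^ 2 * hν'
  · linear_combination μ * ν * ν' * (ν' * (e₁ - e₂) - ν * (e₃ - e₄)) / 4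
      - μ ^ 2 * d (μ ^ 2) Z * (Z + μ ^ 3) * hν - μ ^ 2 * d (μ ^ 2) Z * ν ^ 2 * hν'

namespace Reid

abbrev Axz : Type := MvPolynomial (Fin 2) ℂ

def ι : Axz →ₐ[ℂ] A := aeval ![x, z]

def I : Ideal A := Ideal.span {f, g, h, q21, q22, q23}

def nf (a₀ a₁ a₂ a₃ b₀ b₁ : Axz) : A :=
  ι a₀ + ι a₁ * y + ι a₂ * y ^ 2 + ι a₃ * y ^ 3 + (ι b₀ + ι b₁ * y) * t

lemma ι_X_zero : ι (X 0) = x := by simp [ι]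
lemma ι_X_one : ι (X 1) = z := by simp [ι]

lemma ψ_x : ψ x = u ^ 2 := by simp [ψ, x]
lemma ψ_y : ψ y = u * v := by simp [ψ, y]
lemma ψ_z : ψ z = u ^ 3 + v ^ 2 := by simp [ψ, z]
lemma ψ_t : ψ t = u ^ 3 * v + v ^ 3 := by simp [ψ, t]

lemma span_le_ker : I ≤ RingHom.ker (ψ : A →+* B) := by
  rw [I, Ideal.span_le]
  rintro p (rfl | rfl | rfl | rfl | rfl | rfl) <;>
    simp only [SetLike.mem_coe, RingHom.mem_ker, AlgHom.coe_toRingHom, f, g, h, q21, q22, q23,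
      map_add, map_sub, map_neg, map_mul, map_pow, map_ofNat, ψ_x, ψ_y, ψ_z, ψ_t] <;> ring

lemma f_mem : f ∈ I := Ideal.subset_span (by simp)
lemma g_mem : g ∈ I := Ideal.subset_span (by simp)
lemma h_mem : h ∈ I := Ideal.subset_span (by simp)
lemma q21_mem : q21 ∈ I := Ideal.subset_span (by simp)
lemma q22_mem : q22 ∈ I := Ideal.subset_span (by simp)
lemma q23_mem : q23 ∈ I := Ideal.subset_span (by simp)

section NormalForm

variable (a₀ a₁ a₂ a₃ b₀ b₁ : Axz)

lemma nf_add (a₀' a₁' a₂' a₃' b₀' b₁' : Axz) :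
    nf (a₀ + a₀') (a₁ + a₁') (a₂ + a₂') (a₃ + a₃') (b₀ + b₀') (b₁ + b₁') =
      nf a₀ a₁ a₂ a₃ b₀ b₁ + nf a₀' a₁' a₂' a₃' b₀' b₁' := by
  simp only [nf, map_add]
  ring

lemma nf_mul_x_sub_mem : nf a₀ a₁ a₂ a₃ b₀ b₁ * x -
    nf (X 0 * a₀) (X 0 * a₁) (X 0 * a₂) (X 0 * a₃) (X 0 * b₀) (X 0 * b₁) ∈ I := by
  convert I.zero_mem using 1
  simp only [nf, map_mul, ι_X_zero]
  ring

lemma nf_mul_z_sub_mem : nf a₀ a₁ a₂ a₃ b₀ b₁ * z -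
    nf (X 1 * a₀) (X 1 * a₁) (X 1 * a₂) (X 1 * a₃) (X 1 * b₀) (X 1 * b₁) ∈ I := by
  convert I.zero_mem using 1
  simp only [nf, map_mul, ι_X_one]
  ring

lemma nf_mul_y_sub_mem : nf a₀ a₁ a₂ a₃ b₀ b₁ * y -
    nf ((X 0 ^ 5 - X 0 ^ 2 * X 1 ^ 2) * a₃) (a₀ - X 0 ^ 2 * X 1 * b₁)
      (a₁ + 2 * X 0 * X 1 * a₃) a₂ (X 0 * X 1 * b₁) b₀ ∈ I := by
  convert sub_mem (I.mul_mem_left (ι b₁) g_mem) (I.mul_mem_left (ι a₃) h_mem) using 1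
  simp only [nf, h, g, map_mul, map_add, map_sub, map_pow, map_ofNat, ι_X_zero, ι_X_one]
  ring

lemma nf_mul_t_sub_mem : nf a₀ a₁ a₂ a₃ b₀ b₁ * t -
    nf ((X 1 ^ 3 - X 0 ^ 3 * X 1) * b₀) (X 1 ^ 3 * b₁ - X 0 ^ 2 * X 1 * a₂)
      (-(X 0 ^ 2 * X 1 * a₃)) 0
      (a₀ + X 0 * X 1 * a₂ - X 0 ^ 2 * X 1 * b₁) (a₁ + X 0 * X 1 * a₃ - X 0 * b₀) ∈ I := by
  convert sub_mem (add_mem (I.mul_mem_left (ι a₂ + ι a₃ * y) g_mem) (I.mul_mem_left (ι b₀) f_mem))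
    (I.mul_mem_left (ι b₁) q23_mem) using 1
  simp only [nf, f, g, q23, map_mul, map_add, map_sub, map_neg, map_pow, map_zero,
    ι_X_zero, ι_X_one]
  ring

end NormalForm

theorem exists_sub_nf_mem (p : A) : ∃ a₀ a₁ a₂ a₃ b₀ b₁, p - nf a₀ a₁ a₂ a₃ b₀ b₁ ∈ I := by
  induction p using MvPolynomial.induction_on with
  | C c => exact ⟨C c, 0, 0, 0, 0, 0, by simp [nf, ι]⟩
  | add p q hp hq =>
    obtain ⟨a₀, a₁, a₂, a₃, b₀, b₁, hp⟩ := hp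
    obtain ⟨a₀', a₁', a₂', a₃', b₀', b₁', hq⟩ := hq
    refine ⟨a₀ + a₀', a₁ + a₁', a₂ + a₂', a₃ + a₃', b₀ + b₀', b₁ + b₁', ?_⟩
    rw [nf_add, add_sub_add_comm]
    exact add_mem hp hq
  | mul_X p i hp =>
    obtain ⟨a₀, a₁, a₂, a₃, b₀, b₁, hp⟩ := hp
    have step : ∀ {w n' : A}, nf a₀ a₁ a₂ a₃ b₀ b₁ * w - n' ∈ I → p * w - n' ∈ I :=
      fun {w n'} hn => by
        convert add_mem (I.mul_mem_right w hp) hn using 1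
        ring
    fin_cases i
    · exact ⟨_, _, _, _, _, _, step (nf_mul_x_sub_mem a₀ a₁ a₂ a₃ b₀ b₁)⟩
    · exact ⟨_, _, _, _, _, _, step (nf_mul_y_sub_mem a₀ a₁ a₂ a₃ b₀ b₁)⟩
    · exact ⟨_, _, _, _, _, _, step (nf_mul_z_sub_mem a₀ a₁ a₂ a₃ b₀ b₁)⟩
    · exact ⟨_, _, _, _, _, _, step (nf_mul_t_sub_mem a₀ a₁ a₂ a₃ b₀ b₁)⟩

lemma ψ_nf (a₀ a₁ a₂ a₃ b₀ b₁ : Axz) : ψ (nf a₀ a₁ a₂ a₃ b₀ b₁) =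
    ψ (ι (a₀ + X 0 * X 1 * a₂ - X 0 ^ 2 * X 1 * b₁)) + ψ (ι (X 1 ^ 2 * b₁ - X 0 ^ 2 * a₂)) * u +
      ψ (ι (X 1 * b₀ - X 0 ^ 3 * a₃)) * v + ψ (ι (a₁ + X 0 * X 1 * a₃)) * (u * v) := by
  simp only [nf, map_add, map_sub, map_mul, map_pow, ι_X_zero, ι_X_one, ψ_x, ψ_y, ψ_z, ψ_t]
  ring

lemma eval_ψ_ι (p : Axz) (μ ν : ℂ) : eval ![μ, ν] (ψ (ι p)) = eval ![μ ^ 2, μ ^ 3 + ν ^ 2] p := by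
  have hpt : (fun i => aeval ![μ, ν] (ψ (![x, z] i))) = ![μ ^ 2, μ ^ 3 + ν ^ 2] := by
    funext i
    fin_cases i <;> simp [ψ_x, ψ_z, u, v]
  rw [← aeval_eq_eval, ι, comp_aeval_apply, comp_aeval_apply, hpt, aeval_eq_eval]

theorem eq_zero_of_ψ_ι_combination_eq_zero {a b c d : Axz}
    (H : ψ (ι a) + ψ (ι b) * u + ψ (ι c) * v + ψ (ι d) * (u * v) = 0) :
    a = 0 ∧ b = 0 ∧ c = 0 ∧ d = 0 := by
  have hfiber := fiber_relations (a := fun X Z => eval ![X, Z] a) (b := fun X Z => eval ![X, Z] b)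
    (c := fun X Z => eval ![X, Z] c) (d := fun X Z => eval ![X, Z] d)
    fun μ ν => by simpa [eval_ψ_ι, u, v] using congrArg (eval ![μ, ν]) H
  have cancel {m p : Axz} (hm : m ≠ 0) (hmp : ∀ X Z, eval ![X, Z] m * eval ![X, Z] p = 0) :
      p = 0 :=
    (mul_eq_zero.1 (eq_zero_of_forall_eval_fin_two_eq_zero (p := m * p) (by simpa using hmp)))
      |>.resolve_left hm
  have hx : (X 0 : Axz) ≠ 0 := X_ne_zero 0
  have hcusp : (X 1 ^ 2 - X 0 ^ 3 : Axz) ≠ 0 := fun hc => by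
    simpa using congrArg (eval ![1, 0]) hc
  exact ⟨eq_zero_of_forall_eval_fin_two_eq_zero fun X Z => (hfiber X Z).1,
    cancel hx fun X Z => by simpa using (hfiber X Z).2.1,
    cancel hcusp fun X Z => by simpa using (hfiber X Z).2.2.1,
    cancel (mul_ne_zero hx hcusp) fun X Z => by simpa using (hfiber X Z).2.2.2⟩

theorem nf_mem_of_coeffs {a₀ a₁ a₂ a₃ b₀ b₁ : Axz}
    (h₀ : a₀ + X 0 * X 1 * a₂ - X 0 ^ 2 * X 1 * b₁ = 0) (h₁ : X 1 ^ 2 * b₁ - X 0 ^ 2 * a₂ = 0)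
    (h₂ : X 1 * b₀ - X 0 ^ 3 * a₃ = 0) (h₃ : a₁ + X 0 * X 1 * a₃ = 0) :
    nf a₀ a₁ a₂ a₃ b₀ b₁ ∈ I := by
  have hz_not_dvd (n : ℕ) : ¬(X 1 : Axz) ∣ X 0 ^ n := fun ⟨k, hk⟩ => by
    simpa using congrArg (eval ![1, 0]) hk
  obtain ⟨W, rfl, rfl⟩ :=
    exists_eq_mul_of_pow_mul_eq_mul X_prime (hz_not_dvd 2) 2 (sub_eq_zero.1 h₁)
  obtain ⟨R, rfl, rfl⟩ :=
    exists_eq_mul_of_pow_mul_eq_mul X_prime (hz_not_dvd 3) 1 (by simpa using sub_eq_zero.1 h₂)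
  convert add_mem (I.mul_mem_left (ι W) (add_mem (I.mul_mem_left x f_mem) q22_mem))
    (I.mul_mem_left (ι R) q21_mem) using 1
  rw [eq_sub_of_add_eq (sub_eq_zero.1 h₀), eq_neg_of_add_eq_zero_left h₃]
  simp only [nf, f, q21, q22, map_mul, map_sub, map_neg, map_pow, ι_X_zero, ι_X_one]
  ring

theorem ker_psi_eq_span :
    RingHom.ker (ψ : A →+* B) = Ideal.span {f, g, h, q21, q22, q23} := by
  refine le_antisymm (fun p hp => ?_) span_le_ker
  obtain ⟨a₀, a₁, a₂, a₃, b₀, b₁, hp_nf⟩ := exists_sub_nf_mem p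
  have hψ : ψ (nf a₀ a₁ a₂ a₃ b₀ b₁) = 0 := by
    have hψ_sub := span_le_ker hp_nf
    rw [RingHom.mem_ker, map_sub, hp, zero_sub, neg_eq_zero] at hψ_sub
    exact hψ_sub
  rw [ψ_nf] at hψ
  obtain ⟨h₀, h₁, h₂, h₃⟩ := eq_zero_of_ψ_ι_combination_eq_zero hψ
  simpa [I] using add_mem hp_nf (nf_mem_of_coeffs h₀ h₁ h₂ h₃)

end Reid
end
end

section
/- For every integer i ≥ 13, every polynomial in ℂ[u,v] that is weighted-homogeneous of degree i (with wt(u) = 2, wt(v) = 3) lies in the ℂ-linear span of the set {ψ(m) : m a monomial in x, y, z, t of weighted degree i with respect to the weights wt(x,y,z,t) = (4,5,6,9)}. -/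
noncomputable section

open MvPolynomial

namespace Reid

/-- Weights of the variables `x, y, z, t`. -/
def wA : Fin 4 → ℕ := ![4, 5, 6, 9]
/-- Weights of the variables `u, v`. -/
def wB : Fin 2 → ℕ := ![2, 3]

def Sp (i : ℕ) : Submodule ℂ B :=
  Submodule.span ℂ ((fun d : Fin 4 →₀ ℕ => ψ (monomial d 1)) ''
    {d : Fin 4 →₀ ℕ | ∑ j, d j * wA j = i})

lemma gen_mem (i α β γ δ : ℕ) (h : 4*α+5*β+6*γ+9*δ = i) :
    (u^2)^α * (u*v)^β * (u^3+v^2)^γ * (u^3*v+v^3)^δ ∈ Sp i := by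
  apply Submodule.subset_span
  refine ⟨Finsupp.equivFunOnFinite.symm ![α, β, γ, δ], ?_, ?_⟩
  · show ∑ j, _ = i
    simp [Fin.sum_univ_four, wA]
    omega
  · show ψ _ = _
    rw [ψ, aeval_monomial]
    rw [Finsupp.prod_fintype _ _ (fun j => pow_zero _)]
    simp [Fin.prod_univ_four]

lemma mul_gen (l : Fin 4) (j : ℕ) (q : B) (hq : q ∈ Sp j) :
    ψ (X l) * q ∈ Sp (wA l + j) := by
  induction hq using Submodule.span_induction with
  | mem x hx =>
    obtain ⟨d, hd, rfl⟩ := hx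
    apply Submodule.subset_span
    refine ⟨Finsupp.single l 1 + d, ?_, ?_⟩
    · show ∑ j, _ = _
      simp only [Finsupp.add_apply, add_mul, Finset.sum_add_distrib]
      simp only [Set.mem_setOf_eq] at hd
      rw [hd]
      congr 1
      rw [Finset.sum_eq_single l]
      · simp
      · intro b _ hb; simp [Finsupp.single_apply, hb.symm]
      · simp
    · show ψ _ = _
      rw [← map_mul]
      congr 1
      rw [X, monomial_mul, one_mul]
  | zero => simp
  | add x y _ _ hx hy => rw [mul_add]; exact Submodule.add_mem _ hx hy
  | smul c x _ hx => rw [mul_smul_comm]; exact Submodule.smul_mem _ _ hx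

lemma psi0 : ψ (X 0) = u^2 := by simp [ψ]
lemma psi2 : ψ (X 2) = u^3 + v^2 := by simp [ψ]


lemma mem_of_eq {i : ℕ} {p q : B} (hq : q ∈ Sp i) (h : p = q) : p ∈ Sp i := h ▸ hq

lemma base13 : ∀ a b, 2*a+3*b = 13 → u^a * v^b ∈ Sp 13 := by
  intro a b h
  have ha : a ≤ 6 := by omega
  interval_cases a <;> try omega
  · obtain rfl : b = 3 := by omega
    have h1 := gen_mem 13 1 0 0 1 (by norm_num)
    have h2 := gen_mem 13 2 1 0 0 (by norm_num)
    refine mem_of_eq (Submodule.sub_mem _ h1 h2) (by ring)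
  · obtain rfl : b = 1 := by omega
    refine mem_of_eq (gen_mem 13 2 1 0 0 (by norm_num)) (by ring)

lemma base14 : ∀ a b, 2*a+3*b = 14 → u^a * v^b ∈ Sp 14 := by
  intro a b h
  have ha : a ≤ 7 := by omega
  interval_cases a <;> try omega
  · obtain rfl : b = 4 := by omega
    have h1 := gen_mem 14 0 1 0 1 (by norm_num)
    have h2 := gen_mem 14 1 2 0 0 (by norm_num)
    refine mem_of_eq (Submodule.sub_mem _ h1 h2) (by ring)
  · obtain rfl : b = 2 := by omega
    refine mem_of_eq (gen_mem 14 1 2 0 0 (by norm_num)) (by ring)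
  · obtain rfl : b = 0 := by omega
    have h1 := gen_mem 14 2 0 1 0 (by norm_num)
    have h2 := gen_mem 14 1 2 0 0 (by norm_num)
    refine mem_of_eq (Submodule.sub_mem _ h1 h2) (by ring)

lemma base15 : ∀ a b, 2*a+3*b = 15 → u^a * v^b ∈ Sp 15 := by
  intro a b h
  have ha : a ≤ 7 := by omega
  interval_cases a <;> try omega
  · obtain rfl : b = 5 := by omega
    have h1 := gen_mem 15 0 0 1 1 (by norm_num)
    have h2 := gen_mem 15 1 1 1 0 (by norm_num)
    have h3 := gen_mem 15 0 3 0 0 (by norm_num)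
    refine mem_of_eq (Submodule.sub_mem _ (Submodule.sub_mem _ h1 h2) h3) (by ring)
  · obtain rfl : b = 3 := by omega
    refine mem_of_eq (gen_mem 15 0 3 0 0 (by norm_num)) (by ring)
  · obtain rfl : b = 1 := by omega
    have h1 := gen_mem 15 1 1 1 0 (by norm_num)
    have h2 := gen_mem 15 0 3 0 0 (by norm_num)
    refine mem_of_eq (Submodule.sub_mem _ h1 h2) (by ring)

lemma base16 : ∀ a b, 2*a+3*b = 16 → u^a * v^b ∈ Sp 16 := by
  intro a b h
  have ha : a ≤ 8 := by omega
  interval_cases a <;> try omega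
  · obtain rfl : b = 4 := by omega
    have h1 := gen_mem 16 0 2 1 0 (by norm_num)
    have h2 := gen_mem 16 1 0 2 0 (by norm_num)
    have h3 := gen_mem 16 4 0 0 0 (by norm_num)
    refine mem_of_eq (Submodule.add_mem _ (Submodule.sub_mem _ (Submodule.add_mem _ h1 h1) h2) h3) (by ring)
  · obtain rfl : b = 2 := by omega
    have h1 := gen_mem 16 1 0 2 0 (by norm_num)
    have h2 := gen_mem 16 4 0 0 0 (by norm_num)
    have h3 := gen_mem 16 0 2 1 0 (by norm_num)
    refine mem_of_eq (Submodule.sub_mem _ (Submodule.sub_mem _ h1 h2) h3) (by ring)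
  · obtain rfl : b = 0 := by omega
    refine mem_of_eq (gen_mem 16 4 0 0 0 (by norm_num)) (by ring)

lemma base17 : ∀ a b, 2*a+3*b = 17 → u^a * v^b ∈ Sp 17 := by
  intro a b h
  have ha : a ≤ 8 := by omega
  interval_cases a <;> try omega
  · obtain rfl : b = 5 := by omega
    have h1 := gen_mem 17 0 1 2 0 (by norm_num)
    have h2 := gen_mem 17 3 1 0 0 (by norm_num)
    have h3 := gen_mem 17 2 0 0 1 (by norm_num)
    refine mem_of_eq (Submodule.sub_mem _ (Submodule.sub_mem _ (Submodule.add_mem _ h1 h2) h3) h3) (by ring)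
  · obtain rfl : b = 3 := by omega
    have h1 := gen_mem 17 2 0 0 1 (by norm_num)
    have h2 := gen_mem 17 3 1 0 0 (by norm_num)
    refine mem_of_eq (Submodule.sub_mem _ h1 h2) (by ring)
  · obtain rfl : b = 1 := by omega
    refine mem_of_eq (gen_mem 17 3 1 0 0 (by norm_num)) (by ring)

lemma base18 : ∀ a b, 2*a+3*b = 18 → u^a * v^b ∈ Sp 18 := by
  intro a b h
  have ha : a ≤ 9 := by omega
  interval_cases a <;> try omega
  · obtain rfl : b = 6 := by omega
    have h1 := gen_mem 18 0 0 0 2 (by norm_num)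
    have h2 := gen_mem 18 2 2 0 0 (by norm_num)
    have h3 := gen_mem 18 1 1 0 1 (by norm_num)
    refine mem_of_eq (Submodule.sub_mem _ (Submodule.sub_mem _ (Submodule.add_mem _ h1 h2) h3) h3) (by ring)
  · obtain rfl : b = 4 := by omega
    have h1 := gen_mem 18 1 1 0 1 (by norm_num)
    have h2 := gen_mem 18 2 2 0 0 (by norm_num)
    refine mem_of_eq (Submodule.sub_mem _ h1 h2) (by ring)
  · obtain rfl : b = 2 := by omega
    refine mem_of_eq (gen_mem 18 2 2 0 0 (by norm_num)) (by ring)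
  · obtain rfl : b = 0 := by omega
    have h1 := gen_mem 18 3 0 1 0 (by norm_num)
    have h2 := gen_mem 18 2 2 0 0 (by norm_num)
    refine mem_of_eq (Submodule.sub_mem _ h1 h2) (by ring)

lemma mono_mem : ∀ i, 13 ≤ i → ∀ a b, 2*a+3*b = i → u^a * v^b ∈ Sp i := by
  intro i
  induction i using Nat.strong_induction_on with
  | _ i IH =>
  intro hi a b hab
  by_cases h19 : 19 ≤ i
  · rcases Nat.lt_or_ge a 2 with ha | ha
    · -- a ≤ 1, so b ≥ 2
      have hb : 2 ≤ b := by omega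
      have h1 : ψ (X 2) * (u^a * v^(b-2)) ∈ Sp i := by
        have := mul_gen 2 (i-6) (u^a*v^(b-2))
          (IH (i-6) (by omega) (by omega) a (b-2) (by omega))
        have hw : wA 2 + (i - 6) = i := by simp [wA]; omega
        rwa [hw] at this
      have h2 : ψ (X 0) * (u^(a+1) * v^(b-2)) ∈ Sp i := by
        have := mul_gen 0 (i-4) (u^(a+1)*v^(b-2))
          (IH (i-4) (by omega) (by omega) (a+1) (b-2) (by omega))
        have hw : wA 0 + (i - 4) = i := by simp [wA]; omega
        rwa [hw] at this
      have key : u^a * v^b = ψ (X 2) * (u^a * v^(b-2)) - ψ (X 0) * (u^(a+1) * v^(b-2)) := by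
        rw [psi0, psi2]
        obtain ⟨c, rfl⟩ : ∃ c, b = c + 2 := ⟨b-2, by omega⟩
        simp only [Nat.add_sub_cancel]
        ring
      rw [key]; exact Submodule.sub_mem _ h1 h2
    · have h1 : ψ (X 0) * (u^(a-2) * v^b) ∈ Sp i := by
        have := mul_gen 0 (i-4) (u^(a-2)*v^b)
          (IH (i-4) (by omega) (by omega) (a-2) b (by omega))
        have hw : wA 0 + (i - 4) = i := by simp [wA]; omega
        rwa [hw] at this
      have key : u^a * v^b = ψ (X 0) * (u^(a-2) * v^b) := by
        rw [psi0]
        obtain ⟨c, rfl⟩ : ∃ c, a = c + 2 := ⟨a-2, by omega⟩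
        simp only [Nat.add_sub_cancel]
        ring
      rw [key]; exact h1
  · -- 13 ≤ i ≤ 18
    have hi18 : i ≤ 18 := by omega
    have ha9 : a ≤ 9 := by omega
    interval_cases i
    · exact base13 a b hab
    · exact base14 a b hab
    · exact base15 a b hab
    · exact base16 a b hab
    · exact base17 a b hab
    · exact base18 a b hab

lemma monomial_eq_uv (e : Fin 2 →₀ ℕ) : (monomial e 1 : B) = u ^ (e 0) * v ^ (e 1) := by
  rw [monomial_eq, Finsupp.prod_fintype _ _ (fun j => pow_zero _)]
  simp [Fin.prod_univ_two, u, v]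

theorem monomials_span_high_degrees :
    ∀ i : ℕ, 13 ≤ i → ∀ p : B, p.IsWeightedHomogeneous wB i →
      p ∈ Submodule.span ℂ
        ((fun d : Fin 4 →₀ ℕ => ψ (monomial d 1)) ''
          {d : Fin 4 →₀ ℕ | ∑ j, d j * wA j = i}) := by
  intro i hi p hp
  show p ∈ Sp i
  rw [← p.support_sum_monomial_coeff]
  apply Submodule.sum_mem
  intro e he
  have hdeg : e 0 * 2 + e 1 * 3 = i := by
    have := hp (mem_support_iff.mp he)
    rw [Finsupp.weight_apply] at this
    rw [Finsupp.sum_fintype] at this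
    · rw [Fin.sum_univ_two] at this
      simp only [wB, smul_eq_mul] at this
      simpa using this
    · intro j; exact zero_smul _ _
  have : (monomial e (coeff e p) : B) = coeff e p • (u ^ (e 0) * v ^ (e 1)) := by
    rw [← monomial_eq_uv, smul_monomial, smul_eq_mul, mul_one]
  rw [this]
  exact Submodule.smul_mem _ _ (mono_mem i hi (e 0) (e 1) (by omega))

end Reid
end
end

section
/- The spanning property fails in weighted degree 12: the only monomials in x, y, z, t of weighted degree 12 (with wt(x,y,z,t) = (4,5,6,9)) are x³ and z², and the weighted-degree-12 polynomial u³v² of ℂ[u,v] does not lie in the ℂ-linear span of ψ(x³) = u⁶ and ψ(z²) = (u³ + v²)². -/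
noncomputable section

open MvPolynomial

namespace Reid

theorem degree_twelve_fails :
    (∀ d : Fin 4 →₀ ℕ, (∑ j, d j * wA j = 12) ↔
      (d = Finsupp.single 0 3 ∨ d = Finsupp.single 2 2)) ∧
    ψ ((X 0 : A) ^ 3) = u ^ 6 ∧
    ψ ((X 2 : A) ^ 2) = (u ^ 3 + v ^ 2) ^ 2 ∧
    u ^ 3 * v ^ 2 ∉ Submodule.span ℂ ({u ^ 6, (u ^ 3 + v ^ 2) ^ 2} : Set B) := by
  refine ⟨?_, ?_, ?_, ?_⟩
  · intro d
    rw [Fin.sum_univ_four]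
    simp only [wA, Matrix.cons_val_zero, Matrix.cons_val_one, Matrix.head_cons,
      Matrix.cons_val_two, Matrix.tail_cons, Matrix.cons_val_three]
    constructor
    · intro h
      have : (d 0 = 3 ∧ d 1 = 0 ∧ d 2 = 0 ∧ d 3 = 0) ∨
          (d 0 = 0 ∧ d 1 = 0 ∧ d 2 = 2 ∧ d 3 = 0) := by omega
      rcases this with ⟨h0, h1, h2, h3⟩ | ⟨h0, h1, h2, h3⟩
      · left
        ext i
        fin_cases i <;> simp [h0, h1, h2, h3, Finsupp.single_apply]
      · right
        ext i
        fin_cases i <;> simp [h0, h1, h2, h3, Finsupp.single_apply]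
    · rintro (rfl | rfl) <;> simp [Finsupp.single_apply]
  · simp [ψ]; try ring
  · simp [ψ]; try ring
  · intro hmem
    rw [Submodule.mem_span_pair] at hmem
    obtain ⟨a, b, hab⟩ := hmem
    have e1 : (u ^ 3 + v ^ 2) ^ 2 = u ^ 6 + (u ^ 3 * v ^ 2 + u ^ 3 * v ^ 2) + v ^ 4 := by ring
    have m1 : u ^ 3 * v ^ 2 = monomial (Finsupp.single 0 3 + Finsupp.single 1 2) (1 : ℂ) := by
      simp [u, v, X_pow_eq_monomial, monomial_mul]
    have m2 : u ^ 6 = monomial (Finsupp.single 0 6) (1 : ℂ) := by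
      simp [u, X_pow_eq_monomial]
    have m3 : v ^ 4 = monomial (Finsupp.single 1 4) (1 : ℂ) := by
      simp [v, X_pow_eq_monomial]
    have hc1 := congrArg (coeff (Finsupp.single 1 4)) hab
    have hc2 := congrArg (coeff (Finsupp.single 0 3 + Finsupp.single 1 2)) hab
    have ne1 : (Finsupp.single 0 6 : Fin 2 →₀ ℕ) ≠ Finsupp.single 1 4 := by
      intro h; have := DFunLike.congr_fun h 0; simp at this
    have ne2 : (Finsupp.single 0 3 + Finsupp.single 1 2 : Fin 2 →₀ ℕ) ≠ Finsupp.single 1 4 := by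
      intro h; have := DFunLike.congr_fun h 0; simp at this
    have ne3 : (Finsupp.single 0 6 : Fin 2 →₀ ℕ) ≠
        Finsupp.single 0 3 + Finsupp.single 1 2 := by
      intro h; have := DFunLike.congr_fun h 1; simp at this
    rw [e1, m1, m2, m3] at hc1 hc2
    simp [coeff_monomial, ne1, ne2, ne3, ne3.symm, Ne.symm ne1, Ne.symm ne2] at hc1 hc2
    -- hc1 : b = 0 ; hc2 : 2*b = 1 or similar
    rw [hc1] at hc2; simp at hc2

end Reid
end
end

section
/- The map i : (u,v) ↦ (u², uv, u³ + v², u³v + v³) is injective on weighted projective points: if (u,v) and (u′,v′) are nonzero points of ℂ² and there exists λ ∈ ℂ, λ ≠ 0, with u′² = λ⁴·u², u′v′ = λ⁵·uv, u′³ + v′² = λ⁶·(u³ + v²) and u′³v′ + v′³ = λ⁹·(u³v + v³), then there exists μ ∈ ℂ, μ ≠ 0, with u′ = μ²·u and v′ = μ³·v. -/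
namespace Reid

/-- The map `i : ℙ(2,3) → ℙ(4,5,6,9)`, `(u,v) ↦ (u², uv, u³+v², u³v+v³)`,
is injective on weighted projective points. -/
theorem embedding_injective_on_points :
    ∀ u v u' v' : ℂ, (u, v) ≠ (0, 0) → (u', v') ≠ (0, 0) →
      (∃ l : ℂ, l ≠ 0 ∧
        u' ^ 2 = l ^ 4 * u ^ 2 ∧
        u' * v' = l ^ 5 * (u * v) ∧
        u' ^ 3 + v' ^ 2 = l ^ 6 * (u ^ 3 + v ^ 2) ∧
        u' ^ 3 * v' + v' ^ 3 = l ^ 9 * (u ^ 3 * v + v ^ 3)) →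
      ∃ m : ℂ, m ≠ 0 ∧ u' = m ^ 2 * u ∧ v' = m ^ 3 * v := by
  rintro u v u' v' h h' ⟨l, hl, h1, h2, h3, h4⟩
  by_cases hu : u = 0
  · -- then u' = 0, and v, v' ≠ 0
    subst hu
    have hv : v ≠ 0 := by
      intro hv; exact h (by simp [hv])
    have hu'0 : u' = 0 := by
      have : u' ^ 2 = 0 := by rw [h1]; ring
      exact pow_eq_zero_iff (n := 2) (by norm_num) |>.mp this
    subst hu'0
    have h3' : v' ^ 2 = l ^ 6 * v ^ 2 := by linear_combination h3
    have h4' : v' ^ 3 = l ^ 9 * v ^ 3 := by linear_combination h4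
    refine ⟨l, hl, by simp, ?_⟩
    have key : (v' - l ^ 3 * v) * (l ^ 6 * v ^ 2) = 0 := by
      linear_combination h4' - v' * h3'
    have := mul_eq_zero.mp key
    rcases this with hc | hc
    · linear_combination hc
    · exact absurd hc (mul_ne_zero (pow_ne_zero _ hl) (pow_ne_zero _ hv))
  · -- u ≠ 0
    have key : (u' - l ^ 2 * u) * (u' + l ^ 2 * u) = 0 := by
      linear_combination h1
    rcases mul_eq_zero.mp key with hc | hc
    · -- u' = l² u
      have hu' : u' = l ^ 2 * u := by linear_combination hc
      have hv' : v' = l ^ 3 * v := by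
        have hlu : l ^ 2 * u ≠ 0 := mul_ne_zero (pow_ne_zero _ hl) hu
        apply mul_left_cancel₀ hlu
        rw [← hu']; linear_combination h2 - l ^ 3 * v * hc
      exact ⟨l, hl, hu', hv'⟩
    · -- u' = -l² u : contradiction
      exfalso
      have hu' : u' = -(l ^ 2 * u) := by linear_combination hc
      have hlu : l ^ 2 * u ≠ 0 := mul_ne_zero (pow_ne_zero _ hl) hu
      have key2 : (v' + l ^ 3 * v) * (l ^ 2 * u) = 0 := by
        linear_combination v' * hc - h2
      have hv' : v' = -(l ^ 3 * v) := by
        rcases mul_eq_zero.mp key2 with hc2 | hc2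
        · linear_combination hc2
        · exact absurd hc2 hlu
      have e := h3
      rw [hu', hv'] at e
      have h2u : (2 * l ^ 6) * u ^ 3 = 0 := by linear_combination -e
      have hne : (2 : ℂ) * l ^ 6 ≠ 0 := mul_ne_zero two_ne_zero (pow_ne_zero _ hl)
      have hu3 : u ^ 3 = 0 := by
        rcases mul_eq_zero.mp h2u with hc3 | hc3
        · exact absurd hc3 hne
        · exact hc3
      exact hu (pow_eq_zero_iff (n := 3) (by norm_num) |>.mp hu3)

end Reid
end

section
/- The hypersurface X₂₄ : (F = 0) ⊂ ℙ(4,5,6,9) is quasismooth: if p ∈ ℂ⁴ is a point at which all four partial derivatives ∂F/∂x, ∂F/∂y, ∂F/∂z, ∂F/∂t vanish, then p = (0,0,0,0). -/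
noncomputable section

open MvPolynomial

namespace Reid

/-- The degree 24 equation `F = x·h + y·g + z·f` of the K3 hypersurface
`X₂₄ ⊂ ℙ(4,5,6,9)`. -/
def F : A := x * h + y * g + z * f

lemma pderiv_two (j : Fin 4) : pderiv j (2 : A) = 0 := by
  rw [← map_ofNat (C : ℂ →+* A) 2, pderiv_C]

/-- `X₂₄ : (F = 0) ⊂ ℙ(4,5,6,9)` is quasismooth: the only common zero of the four
partial derivatives of `F` is the origin. -/
theorem X24_quasismooth :
    ∀ p : Fin 4 → ℂ, (∀ j : Fin 4, eval p (pderiv j F) = 0) → p = 0 := by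
  intro p hp
  have h0 : 6*(p 0)^5 + 6*(p 0)*(p 1)^2*(p 2) - (p 1)^4 = 0 := by
    have hh := hp 0
    simp only [F, f, g, h, x, y, z, t] at hh
    simp [pderiv_mul, pderiv_pow, pderiv_X, pderiv_two] at hh
    linear_combination hh
  have h1 : 6*(p 0)^2*(p 1)*(p 2) - 4*(p 0)*(p 1)^3 + 3*(p 1)^2*(p 3) = 0 := by
    have hh := hp 1
    simp only [F, f, g, h, x, y, z, t] at hh
    simp [pderiv_mul, pderiv_pow, pderiv_X, pderiv_two] at hh
    linear_combination hh
  have h2 : 3*(p 0)^2*(p 1)^2 - 4*(p 2)^3 + (p 3)^2 = 0 := by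
    have hh := hp 2
    simp only [F, f, g, h, x, y, z, t] at hh
    simp [pderiv_mul, pderiv_pow, pderiv_X, pderiv_two] at hh
    linear_combination hh
  have h3 : (p 1)^3 + 2*(p 2)*(p 3) = 0 := by
    have hh := hp 3
    simp only [F, f, g, h, x, y, z, t] at hh
    simp [pderiv_mul, pderiv_pow, pderiv_X, pderiv_two] at hh
    linear_combination hh
  have e0 : p 0 = 0 := by
    have : (p 0) ^ 13 = 0 := by
      linear_combination (-4041/161551 : ℂ) * (p 1)^1*(p 2)^3*(p 3)^1 * h0 +
      (3441/323102 : ℂ) * (p 1)^4*(p 2)^2 * h0 +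
      (162/3757 : ℂ) * (p 0)^1*(p 1)^2*(p 2)^3 * h0 +
      (1/36 : ℂ) * (p 0)^3*(p 1)^4 * h0 +
      (-1/6 : ℂ) * (p 0)^4*(p 1)^2*(p 2)^1 * h0 +
      (1/6 : ℂ) * (p 0)^8 * h0 +
      (2/289 : ℂ) * (p 1)^3*(p 3)^2 * h1 +
      (-162/3757 : ℂ) * (p 1)^3*(p 2)^3 * h1 +
      (4041/323102 : ℂ) * (p 0)^1*(p 1)^1*(p 2)^1*(p 3)^2 * h1 +
      (-13333/1938612 : ℂ) * (p 0)^1*(p 1)^4*(p 3)^1 * h1 +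
      (6177/161551 : ℂ) * (p 0)^2*(p 1)^2*(p 2)^1*(p 3)^1 * h1 +
      (85177/2907918 : ℂ) * (p 0)^2*(p 1)^5 * h1 +
      (4041/161551 : ℂ) * (p 0)^3*(p 2)^2*(p 3)^1 * h1 +
      (61682/484653 : ℂ) * (p 0)^3*(p 1)^3*(p 2)^1 * h1 +
      (-162/3757 : ℂ) * (p 0)^4*(p 1)^1*(p 2)^2 * h1 +
      (-133/3757 : ℂ) * (p 1)^2*(p 2)^1*(p 3)^2 * h2 +
      (-1/26 : ℂ) * (p 1)^5*(p 3)^1 * h2 +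
      (-8082/161551 : ℂ) * (p 0)^1*(p 2)^2*(p 3)^2 * h2 +
      (-20205/323102 : ℂ) * (p 0)^1*(p 1)^3*(p 2)^1*(p 3)^1 * h2 +
      (31221/646204 : ℂ) * (p 0)^1*(p 1)^6 * h2 +
      (133/7514 : ℂ) * (p 1)^2*(p 3)^3 * h3 +
      (-266/3757 : ℂ) * (p 1)^2*(p 2)^3*(p 3)^1 * h3 +
      (3441/323102 : ℂ) * (p 1)^5*(p 2)^2 * h3 +
      (4041/161551 : ℂ) * (p 0)^1*(p 2)^1*(p 3)^3 * h3 +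
      (-16164/161551 : ℂ) * (p 0)^1*(p 2)^4*(p 3)^1 * h3
    exact pow_eq_zero_iff (by norm_num) |>.mp this
  have e1 : p 1 = 0 := by
    have : (p 1) ^ 9 = 0 := by
      linear_combination (288/3757 : ℂ) * (p 1)^2*(p 2)^1*(p 3)^1 * h0 +
      (-868/3757 : ℂ) * (p 1)^5 * h0 +
      (1464/3757 : ℂ) * (p 0)^1*(p 1)^3*(p 2)^1 * h0 +
      (324/3757 : ℂ) * (p 1)^1*(p 2)^2*(p 3)^1 * h1 +
      (-1668/3757 : ℂ) * (p 1)^4*(p 2)^1 * h1 +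
      (-144/3757 : ℂ) * (p 0)^1*(p 1)^2*(p 2)^2 * h1 +
      (-270/3757 : ℂ) * (p 0)^2*(p 3)^2 * h1 +
      (-288/3757 : ℂ) * (p 0)^3*(p 1)^1*(p 3)^1 * h1 +
      (-1464/3757 : ℂ) * (p 0)^4*(p 1)^2 * h1 +
      (432/3757 : ℂ) * (p 2)^3*(p 3)^1 * h2 +
      (216/3757 : ℂ) * (p 1)^3*(p 2)^2 * h2 +
      (810/3757 : ℂ) * (p 0)^2*(p 1)^2*(p 3)^1 * h2 +
      (-216/3757 : ℂ) * (p 0)^3*(p 1)^3 * h2 +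
      (-216/3757 : ℂ) * (p 2)^2*(p 3)^2 * h3 +
      (864/3757 : ℂ) * (p 2)^5 * h3 +
      (-486/3757 : ℂ) * (p 1)^3*(p 2)^1*(p 3)^1 * h3 +
      (2889/3757 : ℂ) * (p 1)^6 * h3 +
      (810/3757 : ℂ) * (p 0)^4*(p 1)^1*(p 3)^1 * h3
    exact pow_eq_zero_iff (by norm_num) |>.mp this
  have e2 : p 2 = 0 := by
    have : (p 2) ^ 9 = 0 := by
      linear_combination (-261/30056 : ℂ) * (p 1)^2*(p 2)^1*(p 3)^2 * h0 +
      (45/578 : ℂ) * (p 1)^2*(p 2)^4 * h0 +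
      (1247/60112 : ℂ) * (p 1)^5*(p 3)^1 * h0 +
      (-87/7514 : ℂ) * (p 0)^1*(p 1)^3*(p 2)^1*(p 3)^1 * h0 +
      (131/120224 : ℂ) * (p 1)^1*(p 2)^2*(p 3)^2 * h1 +
      (1/8 : ℂ) * (p 1)^1*(p 2)^5 * h1 +
      (2679/240448 : ℂ) * (p 1)^4*(p 2)^1*(p 3)^1 * h1 +
      (81/3757 : ℂ) * (p 0)^1*(p 1)^2*(p 2)^2*(p 3)^1 * h1 +
      (-141/4624 : ℂ) * (p 0)^1*(p 1)^5*(p 2)^1 * h1 +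
      (-15/289 : ℂ) * (p 0)^2*(p 1)^3*(p 2)^2 * h1 +
      (261/30056 : ℂ) * (p 0)^3*(p 1)^1*(p 3)^2 * h1 +
      (-45/578 : ℂ) * (p 0)^3*(p 1)^1*(p 2)^3 * h1 +
      (87/7514 : ℂ) * (p 0)^4*(p 1)^2*(p 3)^1 * h1 +
      (-131/60112 : ℂ) * (p 2)^3*(p 3)^2 * h2 +
      (-1/4 : ℂ) * (p 2)^6 * h2 +
      (9801/120224 : ℂ) * (p 1)^3*(p 2)^2*(p 3)^1 * h2 +
      (-47/1156 : ℂ) * (p 1)^6*(p 2)^1 * h2 +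
      (-19/2312 : ℂ) * (p 0)^1*(p 1)^4*(p 2)^2 * h2 +
      (-783/30056 : ℂ) * (p 0)^3*(p 1)^3*(p 3)^1 * h2 +
      (131/120224 : ℂ) * (p 2)^2*(p 3)^3 * h3 +
      (1813/15028 : ℂ) * (p 2)^5*(p 3)^1 * h3 +
      (-10325/240448 : ℂ) * (p 1)^3*(p 2)^1*(p 3)^2 * h3 +
      (-49/578 : ℂ) * (p 1)^3*(p 2)^4 * h3 +
      (1247/60112 : ℂ) * (p 1)^6*(p 3)^1 * h3
    exact pow_eq_zero_iff (by norm_num) |>.mp this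
  have e3 : p 3 = 0 := by
    have : (p 3) ^ 5 = 0 := by
      linear_combination (2025/3757 : ℂ) * (p 1)^2*(p 2)^1*(p 3)^1 * h0 +
      (2605/7514 : ℂ) * (p 1)^5 * h0 +
      (-327/3757 : ℂ) * (p 0)^1*(p 1)^3*(p 2)^1 * h0 +
      (1953/3757 : ℂ) * (p 1)^1*(p 2)^2*(p 3)^1 * h1 +
      (4071/7514 : ℂ) * (p 1)^4*(p 2)^1 * h1 +
      (-1446/3757 : ℂ) * (p 0)^1*(p 1)^2*(p 2)^2 * h1 +
      (-2061/3757 : ℂ) * (p 0)^2*(p 3)^2 * h1 +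
      (-2025/3757 : ℂ) * (p 0)^3*(p 1)^1*(p 3)^1 * h1 +
      (327/3757 : ℂ) * (p 0)^4*(p 1)^2 * h1 +
      (1/1 : ℂ) * (p 3)^3 * h2 +
      (-10690/3757 : ℂ) * (p 2)^3*(p 3)^1 * h2 +
      (-5345/3757 : ℂ) * (p 1)^3*(p 2)^2 * h2 +
      (-5088/3757 : ℂ) * (p 0)^2*(p 1)^2*(p 3)^1 * h2 +
      (-2169/3757 : ℂ) * (p 0)^3*(p 1)^3 * h2 +
      (12859/3757 : ℂ) * (p 2)^2*(p 3)^2 * h3 +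
      (-21380/3757 : ℂ) * (p 2)^5 * h3 +
      (-13373/7514 : ℂ) * (p 1)^3*(p 2)^1*(p 3)^1 * h3 +
      (2605/7514 : ℂ) * (p 1)^6 * h3 +
      (6183/3757 : ℂ) * (p 0)^4*(p 1)^1*(p 3)^1 * h3
    exact pow_eq_zero_iff (by norm_num) |>.mp this
  funext j
  fin_cases j
  · exact e0
  · exact e1
  · exact e2
  · exact e3

end Reid
end
end

section
/- The polynomials F₀ = x·h + y·g − z·f and G₀ = x·h + y·g each define a hypersurface in ℙ(4,5,6,9) that is not quasismooth: there exists a nonzero point p ∈ ℂ⁴ at which F₀ and all four of its partial derivatives vanish, and likewise there exists a nonzero point q ∈ ℂ⁴ at which G₀ and all four of its partial derivatives vanish. -/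
noncomputable section

open MvPolynomial

namespace Reid

def F₀ : A := x * h + y * g - z * f
def G₀ : A := x * h + y * g

/-- Both `F₀ = xh + yg − zf` and `G₀ = xh + yg` define hypersurfaces in `ℙ(4,5,6,9)`
that are not quasismooth. -/
theorem F0_G0_not_quasismooth :
    (∃ p : Fin 4 → ℂ, p ≠ 0 ∧ eval p F₀ = 0 ∧ ∀ j : Fin 4, eval p (pderiv j F₀) = 0) ∧
    (∃ q : Fin 4 → ℂ, q ≠ 0 ∧ eval q G₀ = 0 ∧ ∀ j : Fin 4, eval q (pderiv j G₀) = 0) := by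
  constructor
  · refine ⟨![1, 0, 1, 0], ?_, ?_, ?_⟩
    · intro hp
      have := congrFun hp 0
      simp at this
    · simp [F₀, f, g, h, x, y, z, t]
    · intro j
      fin_cases j <;>
        simp [F₀, f, g, h, x, y, z, t, pderiv_mul, pderiv_pow] <;> ring
  · refine ⟨![0, 0, 1, 0], ?_, ?_, ?_⟩
    · intro hq
      have := congrFun hq 2
      simp at this
    · simp [G₀, f, g, h, x, y, z, t]
    · intro j
      fin_cases j <;>
        simp [G₀, f, g, h, x, y, z, t, pderiv_mul, pderiv_pow]


end Reid
end
end

section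
/- Applying ψ entrywise to M gives a matrix over ℂ[u,v] satisfying (v, u, 1)·ψ(M) = 0; that is, for each of the six columns (m₁ⱼ, m₂ⱼ, m₃ⱼ) of M one has v·ψ(m₁ⱼ) + u·ψ(m₂ⱼ) + ψ(m₃ⱼ) = 0 in ℂ[u,v]. -/
noncomputable section

open MvPolynomial

namespace Reid

/-- The 3×6 matrix `M` of relations. -/
def M : Matrix (Fin 3) (Fin 6) A :=
  !![-x, -y, -z, -t, 0, 0;
     y, z, 0, -(x * z), t, x ^ 2;
     0, -x ^ 2, t, z ^ 2, -(y * z), -(x * z) + y ^ 2]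

lemma vec6_five {α : Type*} (a b c d e f : α) : ![a, b, c, d, e, f] 5 = f := rfl

/-- `(v, u, 1) · ψ(M) = 0`, column by column. -/
theorem row_vector_kills_M :
    ∀ j : Fin 6, v * ψ (M 0 j) + u * ψ (M 1 j) + ψ (M 2 j) = 0 := by
  intro j
  fin_cases j <;>
    simp [M, ψ, x, y, z, t, Matrix.cons_val_zero, Matrix.cons_val_one, Matrix.cons_val_succ, vec6_five] <;>
    ring

end Reid
end
end

section
/- The matrix identity M·J·Mᵀ = 0 holds, where the left-hand side is a 3×3 matrix over ℂ[x,y,z,t] and 0 is the 3×3 zero matrix. -/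
noncomputable section

open MvPolynomial

namespace Reid

/-- The 6×6 block matrix `J = [[0, I₃], [−I₃, 0]]`. -/
def J : Matrix (Fin 6) (Fin 6) A :=
  !![0, 0, 0, 1, 0, 0;
     0, 0, 0, 0, 1, 0;
     0, 0, 0, 0, 0, 1;
     -1, 0, 0, 0, 0, 0;
     0, -1, 0, 0, 0, 0;
     0, 0, -1, 0, 0, 0]

def Mt : Matrix (Fin 6) (Fin 3) A :=
  !![-x, y, 0;
     -y, z, -x ^ 2;
     -z, 0, t;
     -t, -(x * z), z ^ 2;
     0, t, -(y * z);
     0, x ^ 2, -(x * z) + y ^ 2]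

lemma transpose_M : M.transpose = Mt := by
  ext i j
  fin_cases i <;> fin_cases j <;> rfl

set_option maxHeartbeats 2000000 in
theorem M_J_Mt_eq_zero : M * J * M.transpose = 0 := by
  rw [transpose_M]
  apply Matrix.ext; intro i j
  fin_cases i <;> fin_cases j <;>
    simp [M, J, Mt, Matrix.mul_apply, Fin.sum_univ_succ, Matrix.cons_val_succ,
      Matrix.cons_val_zero, x, y, z, t] <;>
    ring

end Reid
end
end

section
/- The kernel of the ℂ[x,y,z,t]-linear map φ : ℂ[x,y,z,t]³ → ℂ[u,v], (a,b,c) ↦ ψ(a)·v + ψ(b)·u + ψ(c), equals the submodule of ℂ[x,y,z,t]³ generated by the six columns of the matrix M. -/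
/-!
A `ℂ`-linear section `S` of `φ` sends `u ^ m * v ^ n` to `σ m n`, namely `y ^ min m n` times a lift
of the pure power `u ^ (m - n)` or `v ^ (n - m)`: `u ^ i` lifts to `(0,0,1)` or `(0,1,0)` times a
power of `x` (`ψ x = u²`), and `v ^ j` to `(0,0,1)`, `(1,0,0)` or `(0,-x,z)` times a power of
`q = t - xy` (`ψ q = v³`). The scalars `a` with `a • S p ≡ S (ψ a * p)` modulo the column span `N`
for all `p` form a subalgebra. It contains `x, y, z, q`: for `y` this is exact, for the others it
comes down to finitely many explicit combinations of columns of `M`, propagated by multiplying with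
`x` or `q`. Hence `w ≡ S (φ w) mod N` for every `w`, so `φ w = 0` forces `w ∈ N`; conversely `φ`
kills the columns.
-/

noncomputable section

open MvPolynomial

namespace Reid

section CompatibleScalars

variable {k R P E : Type*} [CommSemiring k] [CommRing R] [CommSemiring P] [Algebra k R]
  [Algebra k P] [AddCommGroup E] [Module R E] [Module k E] [IsScalarTower k R E]

def compatibleScalars (f : R →ₐ[k] P) (N : Submodule R E) (S : P →ₗ[k] E) : Subalgebra k R where
  carrier := {a | ∀ p, a • S p - S (f a * p) ∈ N}
  mul_mem' {a b} ha hb p := by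
    convert add_mem (N.smul_mem a (hb p)) (ha (f b * p)) using 1
    rw [map_mul f, mul_assoc, smul_sub, mul_smul]
    abel
  add_mem' {a b} ha hb p := by
    convert add_mem (ha p) (hb p) using 1
    rw [map_add f, add_mul, map_add, add_smul]
    abel
  algebraMap_mem' r p := by
    rw [AlgHom.commutes, ← Algebra.smul_def, map_smul, algebraMap_smul, sub_self]
    exact N.zero_mem

theorem mem_compatibleScalars_of_monomial {ι : Type*} {f : R →ₐ[k] MvPolynomial ι k}
    {N : Submodule R E} {S : MvPolynomial ι k →ₗ[k] E} {a : R}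
    (h : ∀ d, a • S (monomial d 1) - S (f a * monomial d 1) ∈ N) :
    a ∈ compatibleScalars f N S := by
  intro p
  induction p using MvPolynomial.induction_on' with
  | monomial d c =>
    convert N.smul_of_tower_mem c (h d) using 1
    rw [show monomial d c = c • monomial d (1 : k) by rw [smul_monomial, smul_eq_mul, mul_one],
      mul_smul_comm, map_smul, map_smul, smul_sub, smul_comm]
  | add p₁ p₂ h₁ h₂ =>
    convert add_mem h₁ h₂ using 1
    rw [mul_add, map_add, map_add, smul_add]
    abel

theorem sub_mem_of_compatibleScalars_eq_top {ι : Type*} [Fintype ι] [DecidableEq ι]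
    {f : R →ₐ[k] P} {N : Submodule R (ι → R)} {S : P →ₗ[k] ι → R}
    (htop : compatibleScalars f N S = ⊤) (b : ι → P) (hb : ∀ i, S (b i) = Pi.single i 1)
    (w : ι → R) : w - S (∑ i, f (w i) * b i) ∈ N := by
  have hw : w - S (∑ i, f (w i) * b i) = ∑ i, (w i • S (b i) - S (f (w i) * b i)) := by
    simp only [Finset.sum_sub_distrib, map_sum, hb]
    rw [← pi_eq_sum_univ']
  rw [hw]
  exact sum_mem fun i _ => (htop ▸ Algebra.mem_top : w i ∈ compatibleScalars f N S) (b i)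

end CompatibleScalars

abbrev N : Submodule A (Fin 3 → A) := LinearMap.range M.mulVecLin

theorem mem_N_of_sum_eq (c : Fin 6 → A) {w : Fin 3 → A} (h : ∀ i, ∑ j, M i j * c j = w i) :
    w ∈ N :=
  ⟨c, funext h⟩

@[simp] def q : A := t - x * y

@[simp] def U : ℕ → Fin 3 → A
  | 0 => ![0, 0, 1]
  | 1 => ![0, 1, 0]
  | i + 2 => x • U i

@[simp] def V : ℕ → Fin 3 → A
  | 0 => ![0, 0, 1]
  | 1 => ![1, 0, 0]
  | 2 => ![0, -x, z]
  | j + 3 => q • V j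

theorem x_smul_V_add_two_sub_mem : ∀ j, x • V (j + 2) - y ^ 2 • V j ∈ N
  | 0 => mem_N_of_sum_eq ![0, 0, 0, 0, 0, -1] fun i => by
      fin_cases i <;> (simp [M, Fin.sum_univ_succ]; try ring)
  | 1 => mem_N_of_sum_eq ![-z, y, x, 0, 0, 0] fun i => by
      fin_cases i <;> (simp [M, Fin.sum_univ_succ]; try ring)
  | 2 => mem_N_of_sum_eq ![x * y, 0, 0, -x, 0, -z] fun i => by
      fin_cases i <;> (simp [M, Fin.sum_univ_succ]; try ring)
  | j + 3 => by
    convert N.smul_mem q (x_smul_V_add_two_sub_mem j) using 1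
    simp only [V]
    module

theorem z_smul_U_add_two_sub_mem : ∀ i, z • U (i + 2) - U (i + 5) - y ^ 2 • U i ∈ N
  | 0 => mem_N_of_sum_eq ![0, 0, 0, 0, 0, -1] fun i => by
      fin_cases i <;> (simp [M, Fin.sum_univ_succ]; try ring)
  | 1 => mem_N_of_sum_eq ![-y, x, 0, 0, 0, 0] fun i => by
      fin_cases i <;> (simp [M, Fin.sum_univ_succ]; try ring)
  | i + 2 => by
    convert N.smul_mem x (z_smul_U_add_two_sub_mem i) using 1
    simp only [U]
    module

theorem z_smul_V_add_three_sub_mem : ∀ j, z • V (j + 3) - y ^ 3 • V j - V (j + 5) ∈ N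
  | 0 => mem_N_of_sum_eq ![0, 0, 0, 0, x, -y] fun i => by
      fin_cases i <;> (simp [M, Fin.sum_univ_succ]; try ring)
  | 1 => mem_N_of_sum_eq ![-(y * z), y ^ 2, 2 * x * y - t, 0, 0, 0] fun i => by
      fin_cases i <;> (simp [M, Fin.sum_univ_succ]; try ring)
  | 2 => mem_N_of_sum_eq ![-(y * q), 0, 0, q, y ^ 2, 0] fun i => by
      fin_cases i <;> (simp [M, Fin.sum_univ_succ]; try ring)
  | j + 3 => by
    convert N.smul_mem q (z_smul_V_add_three_sub_mem j) using 1
    simp only [V]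
    module

theorem q_smul_U_add_three_sub_mem : ∀ i, q • U (i + 3) - y ^ 3 • U i ∈ N
  | 0 => mem_N_of_sum_eq ![0, 0, 0, 0, x, -y] fun i => by
      fin_cases i <;> (simp [M, Fin.sum_univ_succ]; try ring)
  | 1 => mem_N_of_sum_eq ![-(y ^ 2 + x * z), x * y, x ^ 2, 0, 0, 0] fun i => by
      fin_cases i <;> (simp [M, Fin.sum_univ_succ]; try ring)
  | i + 2 => by
    convert N.smul_mem x (q_smul_U_add_three_sub_mem i) using 1
    simp only [U]
    module

def σ (m n : ℕ) : Fin 3 → A := if n ≤ m then y ^ n • U (m - n) else y ^ m • V (n - m)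

theorem σ_eq_U {m n i : ℕ} (h : m = n + i) : σ m n = y ^ n • U i := by
  rw [σ, if_pos (by omega), show m - n = i by omega]

theorem σ_eq_V {m n j : ℕ} (h : n = m + j) : σ m n = y ^ m • V j := by
  rcases j with _ | j
  · simp [σ, h]
  · rw [σ, if_neg (by omega), show n - m = j + 1 by omega]

theorem σ_succ_succ (m n : ℕ) : σ (m + 1) (n + 1) = y • σ m n := by
  simp only [σ, Nat.add_le_add_iff_right, Nat.add_sub_add_right]
  split_ifs <;> rw [pow_succ, mul_comm, mul_smul]

theorem x_smul_σ_sub_mem (m n : ℕ) : x • σ m n - σ (m + 2) n ∈ N := by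
  rcases le_or_gt n m with h | h
  · obtain ⟨i, rfl⟩ := Nat.exists_eq_add_of_le h
    rw [σ_eq_U rfl, σ_eq_U (show n + i + 2 = n + (i + 2) by omega)]
    convert N.zero_mem using 1
    simp only [U]
    module
  · obtain ⟨j, rfl⟩ := Nat.exists_eq_add_of_lt h
    rcases j with _ | j
    · rw [σ_eq_V (show m + 0 + 1 = m + 1 by omega)]
      have base : x • V 1 - y • U 1 ∈ N := mem_N_of_sum_eq ![-1, 0, 0, 0, 0, 0] fun i => by
        fin_cases i <;> (simp [M, Fin.sum_univ_succ]; try ring)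
      rw [σ_eq_U (show m + 2 = m + 0 + 1 + 1 by omega)]
      convert N.smul_mem (y ^ m) base using 1
      module
    · rw [σ_eq_V (show m + (j + 1) + 1 = m + (j + 2) by omega),
        σ_eq_V (show m + (j + 1) + 1 = m + 2 + j by omega)]
      convert N.smul_mem (y ^ m) (x_smul_V_add_two_sub_mem j) using 1
      module

theorem z_smul_σ_sub_mem (m n : ℕ) : z • σ m n - σ (m + 3) n - σ m (n + 2) ∈ N := by
  rcases le_or_gt n m with h | h
  · obtain ⟨i, rfl⟩ := Nat.exists_eq_add_of_le h
    rw [σ_eq_U rfl, σ_eq_U (show n + i + 3 = n + (i + 3) by omega)]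
    rcases i with _ | _ | i
    · rw [σ_eq_V (show n + 2 = n + 0 + 2 by omega)]
      have base : z • U 0 - U 3 - V 2 = 0 := by
        funext i; fin_cases i <;> simp
      convert N.zero_mem using 1
      rw [show (0 : Fin 3 → A) = y ^ n • (z • U 0 - U 3 - V 2) by rw [base, smul_zero]]
      module
    · rw [σ_eq_V (show n + 2 = n + (0 + 1) + 1 by omega)]
      have base : z • U 1 - U 4 - y • V 1 ∈ N := mem_N_of_sum_eq ![0, 1, 0, 0, 0, 0] fun i => by
        fin_cases i <;> (simp [M, Fin.sum_univ_succ]; try ring)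
      convert N.smul_mem (y ^ n) base using 1
      module
    · rw [σ_eq_U (show n + (i + 1 + 1) = n + 2 + i by omega)]
      convert N.smul_mem (y ^ n) (z_smul_U_add_two_sub_mem i) using 1
      module
  · obtain ⟨j, rfl⟩ := Nat.exists_eq_add_of_lt h
    rcases j with _ | _ | j
    · rw [σ_eq_V (show m + 0 + 1 = m + 1 by omega), σ_eq_V (show m + 0 + 1 + 2 = m + 3 by omega),
        σ_eq_U (show m + 3 = m + 0 + 1 + 2 by omega)]
      have base : z • V 1 - y • U 2 - V 3 ∈ N := mem_N_of_sum_eq ![0, 0, -1, 0, 0, 0] fun i => by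
        fin_cases i <;> (simp [M, Fin.sum_univ_succ]; try ring)
      convert N.smul_mem (y ^ m) base using 1
      module
    · rw [σ_eq_V (show m + (0 + 1) + 1 = m + 2 by omega),
        σ_eq_V (show m + (0 + 1) + 1 + 2 = m + 4 by omega),
        σ_eq_U (show m + 3 = m + (0 + 1) + 1 + 1 by omega)]
      have base : z • V 2 - y ^ 2 • U 1 - V 4 ∈ N := mem_N_of_sum_eq ![-y, 0, 0, 1, 0, 0] fun i => by
        fin_cases i <;> (simp [M, Fin.sum_univ_succ]; try ring)
      convert N.smul_mem (y ^ m) base using 1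
      module
    · rw [σ_eq_V (show m + (j + 1 + 1) + 1 = m + (j + 3) by omega),
        σ_eq_V (show m + (j + 1 + 1) + 1 + 2 = m + (j + 5) by omega),
        σ_eq_V (show m + (j + 1 + 1) + 1 = m + 3 + j by omega)]
      convert N.smul_mem (y ^ m) (z_smul_V_add_three_sub_mem j) using 1
      module

theorem q_smul_σ_sub_mem (m n : ℕ) : q • σ m n - σ m (n + 3) ∈ N := by
  rcases le_or_gt m n with h | h
  · obtain ⟨j, rfl⟩ := Nat.exists_eq_add_of_le h
    rw [σ_eq_V rfl, σ_eq_V (show m + j + 3 = m + (j + 3) by omega)]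
    convert N.zero_mem using 1
    simp only [V]
    module
  · obtain ⟨i, rfl⟩ := Nat.exists_eq_add_of_lt h
    rw [σ_eq_U (show n + i + 1 = n + (i + 1) by omega)]
    rcases i with _ | _ | i
    · rw [σ_eq_V (show n + 3 = n + 0 + 1 + 2 by omega)]
      have base : q • U 1 - y • V 2 ∈ N := mem_N_of_sum_eq ![0, 0, 0, 0, 1, 0] fun i => by
        fin_cases i <;> (simp [M, Fin.sum_univ_succ]; try ring)
      convert N.smul_mem (y ^ n) base using 1
      module
    · rw [σ_eq_V (show n + 3 = n + (0 + 1) + 1 + 1 by omega)]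
      have base : q • U 2 - y ^ 2 • V 1 ∈ N := mem_N_of_sum_eq ![-z, y, x, 0, 0, 0] fun i => by
        fin_cases i <;> (simp [M, Fin.sum_univ_succ]; try ring)
      convert N.smul_mem (y ^ n) base using 1
      module
    · rw [σ_eq_U (show n + (i + 1 + 1) + 1 = n + 3 + i by omega)]
      convert N.smul_mem (y ^ n) (q_smul_U_add_three_sub_mem i) using 1
      module

def S : B →ₗ[ℂ] Fin 3 → A := (basisMonomials (Fin 2) ℂ).constr ℂ fun d => σ (d 0) (d 1)

theorem monomial_one_eq_u_pow_mul_v_pow (d : Fin 2 →₀ ℕ) :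
    (monomial d 1 : B) = u ^ d 0 * v ^ d 1 := by
  rw [monomial_eq, C_1, one_mul, Finsupp.prod_fintype _ _ (by simp), Fin.prod_univ_two]
  rfl

theorem S_monomial_one (d : Fin 2 →₀ ℕ) : S (monomial d 1) = σ (d 0) (d 1) :=
  (basisMonomials (Fin 2) ℂ).constr_basis ℂ _ d

theorem S_u_pow_mul_v_pow (m n : ℕ) : S (u ^ m * v ^ n) = σ m n := by
  have h := S_monomial_one (Finsupp.single 0 m + Finsupp.single 1 n)
  rwa [monomial_one_eq_u_pow_mul_v_pow, Finsupp.add_apply, Finsupp.add_apply,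
    Finsupp.single_eq_same, Finsupp.single_eq_same, Finsupp.single_eq_of_ne (by decide),
    Finsupp.single_eq_of_ne (by decide), add_zero, zero_add] at h

theorem mem_compatibleScalars {g : A} (h : ∀ m n, g • σ m n - S (ψ g * (u ^ m * v ^ n)) ∈ N) :
    g ∈ compatibleScalars ψ N S :=
  mem_compatibleScalars_of_monomial fun d => by
    rw [S_monomial_one, monomial_one_eq_u_pow_mul_v_pow]
    exact h _ _

theorem x_mem_compatibleScalars : x ∈ compatibleScalars ψ N S := mem_compatibleScalars fun m n => by
  rw [show ψ x * (u ^ m * v ^ n) = u ^ (m + 2) * v ^ n by simp [ψ, x]; ring, S_u_pow_mul_v_pow]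
  exact x_smul_σ_sub_mem m n

theorem y_mem_compatibleScalars : y ∈ compatibleScalars ψ N S := mem_compatibleScalars fun m n => by
  rw [show ψ y * (u ^ m * v ^ n) = u ^ (m + 1) * v ^ (n + 1) by simp [ψ, y]; ring,
    S_u_pow_mul_v_pow, σ_succ_succ, sub_self]
  exact N.zero_mem

theorem z_mem_compatibleScalars : z ∈ compatibleScalars ψ N S := mem_compatibleScalars fun m n => by
  rw [show ψ z * (u ^ m * v ^ n) = u ^ (m + 3) * v ^ n + u ^ m * v ^ (n + 2) by simp [ψ, z]; ring,
    map_add, S_u_pow_mul_v_pow, S_u_pow_mul_v_pow, ← sub_sub]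
  exact z_smul_σ_sub_mem m n

theorem q_mem_compatibleScalars : q ∈ compatibleScalars ψ N S := mem_compatibleScalars fun m n => by
  rw [show ψ q * (u ^ m * v ^ n) = u ^ m * v ^ (n + 3) by simp [ψ, x, y, t]; ring,
    S_u_pow_mul_v_pow]
  exact q_smul_σ_sub_mem m n

theorem compatibleScalars_eq_top : compatibleScalars ψ N S = ⊤ := by
  rw [eq_top_iff, ← adjoin_range_X, Algebra.adjoin_le_iff]
  rintro _ ⟨i, rfl⟩
  fin_cases i
  · exact x_mem_compatibleScalars
  · exact y_mem_compatibleScalars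
  · exact z_mem_compatibleScalars
  · change t ∈ compatibleScalars ψ N S
    rw [show t = q + x * y by simp]
    exact add_mem q_mem_compatibleScalars (mul_mem x_mem_compatibleScalars y_mem_compatibleScalars)

theorem S_eq_single (i : Fin 3) : S (![v, u, 1] i) = Pi.single i 1 := by
  have hv := S_u_pow_mul_v_pow 0 1
  have hu := S_u_pow_mul_v_pow 1 0
  have h1 := S_u_pow_mul_v_pow 0 0
  simp only [pow_zero, pow_one, one_mul, mul_one] at hv hu h1
  fin_cases i <;> funext k <;> fin_cases k <;> simp [hv, hu, h1, σ]

theorem span_columns_eq_N :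
    Submodule.span A {c : Fin 3 → A | ∃ j : Fin 6, c = fun i => M i j} = N := by
  rw [N, Matrix.range_mulVecLin]
  congr 1
  ext c
  exact ⟨fun ⟨j, h⟩ => ⟨j, h.symm⟩, fun ⟨j, h⟩ => ⟨j, h.symm⟩⟩

theorem phi_mulVec_M (c : Fin 6 → A) :
    ψ (M.mulVec c 0) * v + ψ (M.mulVec c 1) * u + ψ (M.mulVec c 2) = 0 := by
  simp [Matrix.mulVec, dotProduct, Fin.sum_univ_succ, M, ψ, x, y, z, t]
  ring

/-- The kernel of `φ : (a,b,c) ↦ ψ(a)·v + ψ(b)·u + ψ(c)` is the `ℂ[x,y,z,t]`-submodule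
of `ℂ[x,y,z,t]³` generated by the six columns of `M`. -/
theorem ker_phi_eq_columns_of_M :
    ∀ w : Fin 3 → A,
      ψ (w 0) * v + ψ (w 1) * u + ψ (w 2) = 0 ↔
      w ∈ Submodule.span A {c : Fin 3 → A | ∃ j : Fin 6, c = fun i => M i j} := by
  intro w
  rw [span_columns_eq_N]
  constructor
  · intro hw
    simpa [Fin.sum_univ_three, hw] using
      sub_mem_of_compatibleScalars_eq_top compatibleScalars_eq_top ![v, u, 1] S_eq_single w
  · rintro ⟨c, rfl⟩
    exact phi_mulVec_M c

end Reid
end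
end
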